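/- arXiv:2204.13370 — 6 statements merged into one kernel-verified Lean document; each statement's English description precedes it below -/
import Mathlib

section
/- Let f : ℝⁿ → ℝ be continuously differentiable, let x ∈ ℝⁿ, let p̄ be a unit vector with ⟨∇f(x), p̄⟩ < 0, let v > 0 be such that the function w ↦ f(x + w·p̄) is strictly convex on [0, v], let t > 0, and suppose u = x + w·p̄ with w = −t·⟨∇f(u), p̄⟩, w ∈ (0, v], and ⟨∇f(u), p̄⟩ ≤ 0. Then there exists c ∈ (0, 1) such that c·|⟨∇f(x), p̄⟩| = |⟨∇f(u), p̄⟩| and the Armijo-type inequality f(u) ≤ f(x) + c·w·⟨∇f(x), p̄⟩ holds. -/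
open scoped RealInnerProductSpace

/-!
Let `g w = f (x + w • p)`, so that `g' 0 = ⟪∇f x, p⟫` and `g' w = ⟪∇f u, p⟫`. Strict convexity of
`g` puts the secant slope `(f u - f x) / w` strictly between these two derivatives. The DPPM
relation `w = -t ⟪∇f u, p⟫` with `w > 0` rules out `g' w = 0`; hence `g' 0 < g' w < 0`, so
`c = g' w / g' 0` lies in `(0, 1)`, and the upper bound on the secant slope is exactly the Armijo inequality.
-/

theorem hasDerivAt_comp_add_smul {E : Type*} [NormedAddCommGroup E] [InnerProductSpace ℝ E]
    [CompleteSpace E] {f : E → ℝ} {x p : E} {s : ℝ} (hf : DifferentiableAt ℝ f (x + s • p)) :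
    HasDerivAt (fun s : ℝ => f (x + s • p)) ⟪gradient f (x + s • p), p⟫ s := by
  have hline : HasDerivAt (fun s : ℝ => x + s • p) p s := by
    simpa using ((hasDerivAt_id s).smul_const p).const_add x
  rw [inner_gradient_left]
  exact hf.hasFDerivAt.comp_hasDerivAt s hline

theorem StrictConvexOn.exists_armijo_of_hasDerivAt {S : Set ℝ} {g : ℝ → ℝ} {a b da db : ℝ}
    (hg : StrictConvexOn ℝ S g) (ha : a ∈ S) (hb : b ∈ S) (hab : a < b)
    (hda : HasDerivAt g da a) (hdb : HasDerivAt g db b) (hdb_neg : db < 0) :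
    ∃ c : ℝ, 0 < c ∧ c < 1 ∧ c * |da| = |db| ∧ g b ≤ g a + c * (b - a) * da := by
  have hda_slope : da < slope g a b := hg.lt_slope_of_hasDerivAt ha hb hab hda
  have hslope_db : slope g a b < db := hg.slope_lt_of_hasDerivAt ha hb hab hdb
  have hda_neg : da < 0 := by linarith
  refine ⟨db / da, div_pos_of_neg_of_neg hdb_neg hda_neg, ?_, ?_, ?_⟩
  · rw [div_lt_one_of_neg hda_neg]
    linarith
  · rw [abs_of_neg hda_neg, abs_of_neg hdb_neg, mul_neg, div_mul_cancel₀ db hda_neg.ne]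
  · have hsecant : g b - g a ≤ (b - a) * db := by
      rw [slope_def_field, div_lt_iff₀ (sub_pos.mpr hab)] at hslope_db
      linarith
    calc g b ≤ g a + (b - a) * db := by linarith
      _ = g a + db / da * (b - a) * da := by rw [mul_right_comm, div_mul_cancel₀ db hda_neg.ne, mul_comm]

theorem dppm_armijo_parameter_general {n : ℕ} (f : EuclideanSpace ℝ (Fin n) → ℝ)
    (hf : ContDiff ℝ 1 f) (x : EuclideanSpace ℝ (Fin n))
    (p : EuclideanSpace ℝ (Fin n))
    (v : ℝ)
    (hconv : StrictConvexOn ℝ (Set.Icc (0:ℝ) v) (fun w : ℝ => f (x + w • p)))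
    (t : ℝ)
    (u : EuclideanSpace ℝ (Fin n)) (w : ℝ)
    (hu : u = x + w • p)
    (hw : w = -t * ⟪gradient f u, p⟫)
    (hwmem : w ∈ Set.Ioc (0:ℝ) v)
    (hgu : ⟪gradient f u, p⟫ ≤ 0) :
    ∃ c : ℝ, 0 < c ∧ c < 1 ∧
      c * |⟪gradient f x, p⟫| = |⟪gradient f u, p⟫| ∧
      f u ≤ f x + c * w * ⟪gradient f x, p⟫ := by
  obtain ⟨hw_pos, hw_le⟩ := hwmem
  have hgu_neg : ⟪gradient f u, p⟫ < 0 := by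
    refine hgu.lt_of_ne fun h => ?_
    rw [h, mul_zero] at hw
    exact hw_pos.ne' hw
  have hdiff : Differentiable ℝ f := hf.differentiable one_ne_zero
  have hd0 := hasDerivAt_comp_add_smul (s := 0) (p := p) (hdiff (x + (0 : ℝ) • p))
  have hdw := hasDerivAt_comp_add_smul (s := w) (p := p) (hdiff (x + w • p))
  rw [zero_smul, add_zero] at hd0
  rw [← hu] at hdw
  have h0mem : (0 : ℝ) ∈ Set.Icc 0 v := ⟨le_rfl, hw_pos.le.trans hw_le⟩
  obtain ⟨c, hc⟩ :=
    hconv.exists_armijo_of_hasDerivAt h0mem ⟨hw_pos.le, hw_le⟩ hw_pos hd0 hdw hgu_neg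
  exact ⟨c, by simpa [← hu] using hc⟩

/-- existence of an Armijo parameter `c ∈ (0,1)` for a DPPM update along a
direction of strict local convexity (Lemma 5 of the paper). -/
theorem dppm_armijo_parameter {n : ℕ} (f : EuclideanSpace ℝ (Fin n) → ℝ)
    (hf : ContDiff ℝ 1 f) (x : EuclideanSpace ℝ (Fin n))
    (p : EuclideanSpace ℝ (Fin n)) (hp : ‖p‖ = 1)
    (hdesc : ⟪gradient f x, p⟫ < 0)
    (v : ℝ) (hv : 0 < v)
    (hconv : StrictConvexOn ℝ (Set.Icc (0:ℝ) v) (fun w : ℝ => f (x + w • p)))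
    (t : ℝ) (ht : 0 < t)
    (u : EuclideanSpace ℝ (Fin n)) (w : ℝ)
    (hu : u = x + w • p)
    (hw : w = -t * ⟪gradient f u, p⟫)
    (hwmem : w ∈ Set.Ioc (0:ℝ) v)
    (hgu : ⟪gradient f u, p⟫ ≤ 0) :
    ∃ c : ℝ, 0 < c ∧ c < 1 ∧
      c * |⟪gradient f x, p⟫| = |⟪gradient f u, p⟫| ∧
      f u ≤ f x + c * w * ⟪gradient f x, p⟫ :=
  dppm_armijo_parameter_general f hf x p v hconv t u w hu hw hwmem hgu
end

section
/- Let D ⊆ ℝⁿ be a convex set, let f : ℝⁿ → ℝ be continuously differentiable and convex on D, let x* ∈ D satisfy ∇f(x*) = 0 with f* = f(x*), let x ∈ D with x ≠ x*, let p̄ be a unit vector, let t > 0, and let u = x − t·⟨∇f(u), p̄⟩·p̄ ∈ D with step-size w = −t·⟨∇f(u), p̄⟩ ≥ 0. Suppose ∇f(u) ≠ 0 and, writing p̄* = (x* − x)/‖x* − x‖ and v for the orthogonal projection of p̄* onto the linear span of {p̄, ∇f(u)}, suppose ∇f(u)/‖∇f(u)‖ = α·p̄ + β·v with β ≥ 0.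 Then 2t·(f(u) − f*) + w² ≤ ‖x − x*‖² − ‖u − x*‖²; in particular ‖u − x*‖ ≤ ‖x − x*‖. -/
/-!
Write `g = ∇f(u)` and `u - x = w • p̄`. Convexity gives `f(u) - f* ≤ ⟪g, u - x*⟫`, and expanding
`x - x* = (u - x*) - w • p̄` gives `‖x - x*‖² - ‖u - x*‖² - w² = 2t ⟪g, p̄⟫ ⟪p̄, u - x*⟫`. So it
suffices that `⟪g, p̄⟫ ⟪p̄, d⟫ ≤ ⟪g, d⟫` for `d = x* - x`: the part of `g` orthogonal to `p̄` makes a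
nonnegative inner product with `d`. Since `p̄*` and its projection `v` have the same inner products
with `p̄` and `g`, this reduces to `d = v`, where, for `g ∝ α • p̄ + β • v`, the defect is
`β (‖v‖² - ⟪p̄, v⟫²) ≥ 0` by Cauchy–Schwarz.
-/

open scoped RealInnerProductSpace

theorem ConvexOn.add_le_of_hasFDerivAt {E : Type*} [NormedAddCommGroup E] [NormedSpace ℝ E]
    {D : Set E} {f : E → ℝ} {f' : E →L[ℝ] ℝ} {a b : E} (hf : ConvexOn ℝ D f)
    (hf' : HasFDerivAt f f' a) (ha : a ∈ D) (hb : b ∈ D) :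
    f a + f' (b - a) ≤ f b := by
  let L := AffineMap.lineMap (k := ℝ) a b
  have hderiv : HasDerivAt (f ∘ L) (f' (b - a)) 0 :=
    HasFDerivAt.comp_hasDerivAt 0 (by simpa [L] using hf') AffineMap.hasDerivAt_lineMap
  have hslope := (hf.comp_affineMap L).le_slope_of_hasDerivAt (x := 0) (y := 1)
    (by simpa [L] using ha) (by simpa [L] using hb) one_pos hderiv
  simp [slope, L] at hslope
  rw [map_sub]
  linarith

section InnerProductSpace

variable {E : Type*} [NormedAddCommGroup E] [InnerProductSpace ℝ E]

theorem ConvexOn.add_inner_le_of_hasGradientAt [CompleteSpace E] {D : Set E} {f : E → ℝ}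
    {g a b : E} (hf : ConvexOn ℝ D f) (hg : HasGradientAt f g a) (ha : a ∈ D) (hb : b ∈ D) :
    f a + ⟪g, b - a⟫ ≤ f b := by
  simpa using hf.add_le_of_hasFDerivAt hg.hasFDerivAt ha hb

theorem norm_smul_inv_norm_smul (x : E) : ‖x‖ • ‖x‖⁻¹ • x = x := by
  rcases eq_or_ne x 0 with rfl | hx
  · simp
  · exact smul_inv_smul₀ (norm_ne_zero_iff.mpr hx) x

theorem real_inner_smul_add_smul_mul_inner_le {p v : E} (hp : ‖p‖ = 1) (α : ℝ) {β : ℝ}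
    (hβ : 0 ≤ β) : ⟪α • p + β • v, p⟫ * ⟪p, v⟫ ≤ ⟪α • p + β • v, v⟫ := by
  have hcs : ⟪p, v⟫ * ⟪p, v⟫ ≤ ‖v‖ ^ 2 := by
    simpa [real_inner_self_eq_norm_sq, hp] using real_inner_mul_inner_self_le p v
  simp only [inner_add_left, real_inner_smul_left, real_inner_self_eq_norm_sq, hp,
    real_inner_comm p v]
  linarith [mul_le_mul_of_nonneg_left hcs hβ]

theorem real_inner_mul_inner_le_of_normalize_eq {g p v y : E} {α β : ℝ} (hp : ‖p‖ = 1)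
    (hβ : 0 ≤ β) (hg : ‖g‖⁻¹ • g = α • p + β • v)
    (hy : y - v ∈ (Submodule.span ℝ {p, g})ᗮ) : ⟪g, p⟫ * ⟪p, y⟫ ≤ ⟪g, y⟫ := by
  have hyv : ∀ z ∈ Submodule.span ℝ {p, g}, ⟪z, y⟫ = ⟪z, v⟫ := fun z hz ↦ by
    rw [← sub_eq_zero, ← inner_sub_right]
    exact (Submodule.mem_orthogonal _ _).mp hy z hz
  rw [hyv p (Submodule.subset_span (by simp)), hyv g (Submodule.subset_span (by simp)),
    ← norm_smul_inv_norm_smul g, hg, real_inner_smul_left, real_inner_smul_left, mul_assoc]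
  exact mul_le_mul_of_nonneg_left (real_inner_smul_add_smul_mul_inner_le hp α hβ) (norm_nonneg g)

theorem real_inner_le_inner_mul_inner_of_sub_eq_smul {g p x u y : E} {w : ℝ} (hp : ‖p‖ = 1)
    (hu : u - x = w • p) (hangle : ⟪g, p⟫ * ⟪p, y - x⟫ ≤ ⟪g, y - x⟫) :
    ⟪g, u - y⟫ ≤ ⟪g, p⟫ * ⟪p, u - y⟫ := by
  have huy : u - y = w • p - (y - x) := by rw [← hu]; abel
  simp only [huy, inner_sub_right, real_inner_smul_right, real_inner_self_eq_norm_sq,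
    hp] at hangle ⊢
  linarith

theorem norm_sub_sq_sub_norm_sub_sq_of_sub_eq_smul {p x u y : E} {w : ℝ} (hp : ‖p‖ = 1)
    (hu : u - x = w • p) : ‖x - y‖ ^ 2 - ‖u - y‖ ^ 2 = w ^ 2 - 2 * w * ⟪p, u - y⟫ := by
  have hxy : x - y = (u - y) - w • p := by rw [← hu]; abel
  rw [hxy, norm_sub_sq_real, real_inner_smul_right, norm_smul, hp, Real.norm_eq_abs, mul_one,
    sq_abs, real_inner_comm]
  ring

end InnerProductSpace

theorem dppm_fejer_inequality_general {n : ℕ}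
    (D : Set (EuclideanSpace ℝ (Fin n)))
    (f : EuclideanSpace ℝ (Fin n) → ℝ) (hf : ContDiff ℝ 1 f)
    (hfconv : ConvexOn ℝ D f)
    (xs : EuclideanSpace ℝ (Fin n)) (hxs : xs ∈ D)
    (hcrit : gradient f xs = 0)
    (fstar : ℝ) (hfstar : fstar = f xs)
    (x : EuclideanSpace ℝ (Fin n))
    (p : EuclideanSpace ℝ (Fin n)) (hp : ‖p‖ = 1)
    (t : ℝ) (ht : 0 < t)
    (u : EuclideanSpace ℝ (Fin n))
    (hu : u = x - (t * ⟪gradient f u, p⟫) • p) (huD : u ∈ D)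
    (w : ℝ) (hw : w = -(t * ⟪gradient f u, p⟫))
    (ps : EuclideanSpace ℝ (Fin n)) (hps : ps = ‖xs - x‖⁻¹ • (xs - x))
    (v : EuclideanSpace ℝ (Fin n))
    (hvperp : ps - v ∈ (Submodule.span ℝ {p, gradient f u})ᗮ)
    (α β : ℝ) (hβ : 0 ≤ β)
    (hdecomp : ‖gradient f u‖⁻¹ • gradient f u = α • p + β • v) :
    2 * t * (f u - fstar) + w ^ 2 ≤ ‖x - xs‖ ^ 2 - ‖u - xs‖ ^ 2 ∧
    ‖u - xs‖ ≤ ‖x - xs‖ := by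
  have hgrad : ∀ y, HasGradientAt f (gradient f y) y := fun y ↦
    ((hf.differentiable one_ne_zero) y).hasGradientAt
  have hstep : u - x = w • p := by
    conv_lhs => rw [hu]
    rw [hw]
    module
  have hconv := hfconv.add_inner_le_of_hasGradientAt (hgrad u) huD hxs
  have hmin := hfconv.add_inner_le_of_hasGradientAt (hgrad xs) hxs huD
  rw [hcrit, inner_zero_left] at hmin
  have hangle : ⟪gradient f u, p⟫ * ⟪p, xs - x⟫ ≤ ⟪gradient f u, xs - x⟫ := by
    rw [← norm_smul_inv_norm_smul (xs - x), ← hps, real_inner_smul_right, real_inner_smul_right,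
      mul_left_comm]
    exact mul_le_mul_of_nonneg_left
      (real_inner_mul_inner_le_of_normalize_eq hp hβ hdecomp hvperp) (norm_nonneg _)
  have hdir := real_inner_le_inner_mul_inner_of_sub_eq_smul hp hstep hangle
  have hnorm := norm_sub_sq_sub_norm_sub_sq_of_sub_eq_smul (y := xs) hp hstep
  have hfu : f u - fstar ≤ ⟪gradient f u, p⟫ * ⟪p, u - xs⟫ := by
    rw [← neg_sub u xs, inner_neg_right] at hconv
    linarith
  have hdesc : 2 * t * (f u - fstar) + w ^ 2 ≤ ‖x - xs‖ ^ 2 - ‖u - xs‖ ^ 2 := by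
    rw [hnorm, hw]
    linarith [mul_le_mul_of_nonneg_left hfu (by positivity : (0 : ℝ) ≤ 2 * t)]
  refine ⟨hdesc, ?_⟩
  have hgap : 0 ≤ 2 * t * (f u - fstar) + w ^ 2 := by
    have : 0 ≤ f u - fstar := by linarith
    positivity
  exact (pow_le_pow_iff_left₀ (norm_nonneg _) (norm_nonneg _) two_ne_zero).mp (by linarith)

/-- Fejér-type inequality for a DPPM update inside a convex region on
which `f` is convex (Corollary `dppmfejer`(i) of the paper). -/
theorem dppm_fejer_inequality {n : ℕ}
    (D : Set (EuclideanSpace ℝ (Fin n))) (hD : Convex ℝ D)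
    (f : EuclideanSpace ℝ (Fin n) → ℝ) (hf : ContDiff ℝ 1 f)
    (hfconv : ConvexOn ℝ D f)
    (xs : EuclideanSpace ℝ (Fin n)) (hxs : xs ∈ D)
    (hcrit : gradient f xs = 0)
    (fstar : ℝ) (hfstar : fstar = f xs)
    (x : EuclideanSpace ℝ (Fin n)) (hx : x ∈ D) (hxne : x ≠ xs)
    (p : EuclideanSpace ℝ (Fin n)) (hp : ‖p‖ = 1)
    (t : ℝ) (ht : 0 < t)
    (u : EuclideanSpace ℝ (Fin n))
    (hu : u = x - (t * ⟪gradient f u, p⟫) • p) (huD : u ∈ D)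
    (w : ℝ) (hw : w = -(t * ⟪gradient f u, p⟫)) (hwnn : 0 ≤ w)
    (hgu : gradient f u ≠ 0)
    (ps : EuclideanSpace ℝ (Fin n)) (hps : ps = ‖xs - x‖⁻¹ • (xs - x))
    (v : EuclideanSpace ℝ (Fin n))
    (hvmem : v ∈ Submodule.span ℝ {p, gradient f u})
    (hvperp : ps - v ∈ (Submodule.span ℝ {p, gradient f u})ᗮ)
    (α β : ℝ) (hβ : 0 ≤ β)
    (hdecomp : ‖gradient f u‖⁻¹ • gradient f u = α • p + β • v) :
    2 * t * (f u - fstar) + w ^ 2 ≤ ‖x - xs‖ ^ 2 - ‖u - xs‖ ^ 2 ∧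
    ‖u - xs‖ ≤ ‖x - xs‖ :=
  dppm_fejer_inequality_general D f hf hfconv xs hxs hcrit fstar hfstar x p hp t ht u hu huD w hw ps
    hps v hvperp α β hβ hdecomp
end

section
/- Let t > 0, let θₖ = 2/(k+1) for k ≥ 1, and let {aₖ}_{k≥0} and {bₖ}_{k≥0} be sequences of nonnegative real numbers satisfying, for every k ≥ 1, (1/θₖ²)·aₖ + bₖ ≤ ((1 − θₖ)/θₖ²)·aₖ₋₁ + bₖ₋₁. Then for every k ≥ 1, aₖ ≤ θₖ²·b₀ = 4·b₀/(k+1)². In particular, for the accelerated DPPM where aₖ = f(xᵏ) − f* and bₖ = (1/t)·‖vᵏ − x*‖² with v⁰ = x⁰, one obtains f(xᵏ) − f* ≤ (4/(t·(k+1)²))·‖x⁰ − x*‖², so an ε-suboptimal value is reached in O(1/√ε) iterations. -/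
/-!
With `θₖ = 2/(k+1)` one has `θ₁ = 1` and `(1 - θₖ₊₁)/θₖ₊₁² = k(k+2)/4 ≤ (k+1)²/4 = 1/θₖ²`.
Since `aₖ ≥ 0`, the recursion therefore makes the energy `aₖ/θₖ² + bₖ` nonincreasing for `k ≥ 1`,
and its first value is at most `b₀`. Dropping `bₖ ≥ 0` gives `aₖ ≤ θₖ² b₀`.
-/

lemma one_sub_div_sq_le_one_div_sq (k : ℝ) (hk : 0 ≤ k) :
    (1 - 2 / (k + 2)) / (2 / (k + 2)) ^ 2 ≤ 1 / (2 / (k + 1)) ^ 2 := by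
  have hk2 : k + 2 ≠ 0 := by positivity
  have hk1 : k + 1 ≠ 0 := by positivity
  calc (1 - 2 / (k + 2)) / (2 / (k + 2)) ^ 2 = k * (k + 2) / 4 := by field_simp; ring
    _ ≤ (k + 1) ^ 2 / 4 := by nlinarith
    _ = 1 / (2 / (k + 1)) ^ 2 := by field_simp; norm_num

lemma energy_le_of_nesterov_rec (θ a b : ℕ → ℝ) (ha : ∀ k, 0 ≤ a k) (hθ₁ : θ 1 = 1)
    (hcoef : ∀ k, 1 ≤ k → (1 - θ (k + 1)) / θ (k + 1) ^ 2 ≤ 1 / θ k ^ 2)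
    (hrec : ∀ k : ℕ, 1 ≤ k →
      (1 / (θ k) ^ 2) * a k + b k ≤ ((1 - θ k) / (θ k) ^ 2) * a (k - 1) + b (k - 1)) :
    ∀ k, 1 ≤ k → 1 / θ k ^ 2 * a k + b k ≤ b 0 := by
  intro k hk
  induction k, hk using Nat.le_induction with
  | base => simpa [hθ₁] using hrec 1 le_rfl
  | succ k hk ih =>
    calc 1 / θ (k + 1) ^ 2 * a (k + 1) + b (k + 1)
        ≤ (1 - θ (k + 1)) / θ (k + 1) ^ 2 * a k + b k := hrec (k + 1) (by omega)
      _ ≤ 1 / θ k ^ 2 * a k + b k := by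
        linarith [mul_le_mul_of_nonneg_right (hcoef k hk) (ha k)]
      _ ≤ b 0 := ih

lemma le_sq_mul_of_one_div_sq_mul_add_le {θ a b c : ℝ} (hθ : θ ≠ 0) (hb : 0 ≤ b)
    (h : 1 / θ ^ 2 * a + b ≤ c) : a ≤ θ ^ 2 * c := by
  have hθ2 : 0 < θ ^ 2 := by positivity
  calc a = θ ^ 2 * (1 / θ ^ 2 * a) := by field_simp
    _ ≤ θ ^ 2 * c := by gcongr; linarith

theorem dppm_accelerated_rate_general {n : ℕ} (t : ℝ)
    (θ : ℕ → ℝ) (hθ : ∀ k : ℕ, θ k = 2 / (k + 1))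
    (a b : ℕ → ℝ) (ha : ∀ k, 0 ≤ a k) (hb : ∀ k, 0 ≤ b k)
    (hrec : ∀ k : ℕ, 1 ≤ k →
      (1 / (θ k) ^ 2) * a k + b k ≤ ((1 - θ k) / (θ k) ^ 2) * a (k - 1) + b (k - 1)) :
    (∀ k : ℕ, 1 ≤ k → a k ≤ (θ k) ^ 2 * b 0 ∧ (θ k) ^ 2 * b 0 = 4 * b 0 / (k + 1) ^ 2) ∧
    (∀ (f : EuclideanSpace ℝ (Fin n) → ℝ) (fstar : ℝ)
        (x v : ℕ → EuclideanSpace ℝ (Fin n)) (xs : EuclideanSpace ℝ (Fin n)),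
      v 0 = x 0 →
      (∀ k, a k = f (x k) - fstar) →
      (∀ k, b k = (1 / t) * ‖v k - xs‖ ^ 2) →
      ∀ k : ℕ, 1 ≤ k →
        f (x k) - fstar ≤ (4 / (t * (k + 1) ^ 2)) * ‖x 0 - xs‖ ^ 2) := by
  have hcoef : ∀ k, 1 ≤ k → (1 - θ (k + 1)) / θ (k + 1) ^ 2 ≤ 1 / θ k ^ 2 := by
    intro k _
    rw [hθ, hθ]
    push_cast
    convert one_sub_div_sq_le_one_div_sq k k.cast_nonneg using 3 <;> ring
  have henergy := energy_le_of_nesterov_rec θ a b ha (by norm_num [hθ]) hcoef hrec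
  have hrate : ∀ k : ℕ, 1 ≤ k → a k ≤ (θ k) ^ 2 * b 0 ∧ (θ k) ^ 2 * b 0 = 4 * b 0 / (k + 1) ^ 2 :=
    fun k hk => ⟨le_sq_mul_of_one_div_sq_mul_add_le (by rw [hθ]; positivity) (hb k)
      (henergy k hk), by rw [hθ, div_pow]; ring⟩
  refine ⟨hrate, fun f fstar x v xs hv₀ haf hbv k hk => ?_⟩
  calc f (x k) - fstar = a k := (haf k).symm
    _ ≤ 4 * b 0 / (k + 1) ^ 2 := (hrate k hk).2 ▸ (hrate k hk).1
    _ = 4 / (t * (k + 1) ^ 2) * ‖x 0 - xs‖ ^ 2 := by rw [hbv 0, hv₀, mul_comm t, ← div_div]; ring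

/-- the Nesterov-type recursion yields an O(1/k²) rate, hence the
accelerated DPPM reaches an ε-suboptimal value in O(1/√ε) iterations. -/
theorem dppm_accelerated_rate {n : ℕ} (t : ℝ) (ht : 0 < t)
    (θ : ℕ → ℝ) (hθ : ∀ k : ℕ, θ k = 2 / (k + 1))
    (a b : ℕ → ℝ) (ha : ∀ k, 0 ≤ a k) (hb : ∀ k, 0 ≤ b k)
    (hrec : ∀ k : ℕ, 1 ≤ k →
      (1 / (θ k) ^ 2) * a k + b k ≤ ((1 - θ k) / (θ k) ^ 2) * a (k - 1) + b (k - 1)) :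
    (∀ k : ℕ, 1 ≤ k → a k ≤ (θ k) ^ 2 * b 0 ∧ (θ k) ^ 2 * b 0 = 4 * b 0 / (k + 1) ^ 2) ∧
    (∀ (f : EuclideanSpace ℝ (Fin n) → ℝ) (fstar : ℝ)
        (x v : ℕ → EuclideanSpace ℝ (Fin n)) (xs : EuclideanSpace ℝ (Fin n)),
      v 0 = x 0 →
      (∀ k, a k = f (x k) - fstar) →
      (∀ k, b k = (1 / t) * ‖v k - xs‖ ^ 2) →
      ∀ k : ℕ, 1 ≤ k →
        f (x k) - fstar ≤ (4 / (t * (k + 1) ^ 2)) * ‖x 0 - xs‖ ^ 2) :=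
  dppm_accelerated_rate_general t θ hθ a b ha hb hrec
end

section
/- Let Q ∈ ℝ^{n×n} be a symmetric positive definite matrix with smallest eigenvalue m > 0, and let p̄₀, …, p̄_{n−1} be Q-conjugate unit vectors (‖p̄ᵢ‖ = 1 and p̄ᵢᵀQp̄ⱼ = 0 for i ≠ j). Let λ > 0, let x⁰ = Σ_{i=0}^{n−1} bᵢ·p̄ᵢ, and define x^{j+1} = (I + λ·p̄ⱼp̄ⱼᵀQ)⁻¹·xʲ for j = 0, …, n−1. Then xⁿ = Σ_{i=0}^{n−1} (bᵢ/(1 + λ·p̄ᵢᵀQp̄ᵢ))·p̄ᵢ, and consequently ‖xⁿ‖_Q ≤ (1/(1 + λm))·‖x⁰‖_Q, where ‖y‖_Q = √(yᵀQy). -/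
/-! By Sherman–Morrison, the DPPM matrix `1 + λ • p pᵀ Q` is inverted by
`v ↦ v - (λ pᵀQv / (1 + λ pᵀQp)) • p`. On an expansion `∑ cᵢ • pᵢ` in a `Q`-conjugate family
this divides the coefficient of the current direction `pⱼ` by `1 + λ dⱼ`, `dⱼ = pⱼᵀQpⱼ`, and
leaves the others alone, so a full cycle divides every `bᵢ` by `1 + λ dᵢ`. Since the `Q`-norm
squared of a conjugate expansion is `∑ cᵢ² dᵢ` and `dᵢ ≥ m` for unit `pᵢ`, every factor is at
most `1 / (1 + λ m)`. -/

open Matrix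

namespace Matrix

section RankOne

variable {K ι : Type*} [Field K] [Fintype ι] [DecidableEq ι]

theorem inv_one_add_vecMulVec (u w : ι → K) (h : 1 + w ⬝ᵥ u ≠ 0) :
    (1 + vecMulVec u w)⁻¹ = 1 - (1 + w ⬝ᵥ u)⁻¹ • vecMulVec u w := by
  apply inv_eq_right_inv
  have hsq : vecMulVec u w * vecMulVec u w = (w ⬝ᵥ u) • vecMulVec u w := by
    rw [vecMulVec_mul_vecMulVec, vecMulVec_smul]
  calc (1 + vecMulVec u w) * (1 - (1 + w ⬝ᵥ u)⁻¹ • vecMulVec u w)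
      = 1 + (1 - (1 + w ⬝ᵥ u)⁻¹ * (1 + w ⬝ᵥ u)) • vecMulVec u w := by
        simp only [mul_sub, add_mul, one_mul, mul_one, Matrix.mul_smul, hsq, smul_smul]
        module
    _ = 1 := by rw [inv_mul_cancel₀ h, sub_self, zero_smul, add_zero]

theorem inv_one_add_vecMulVec_mulVec (u w v : ι → K) (h : 1 + w ⬝ᵥ u ≠ 0) :
    (1 + vecMulVec u w)⁻¹ *ᵥ v = v - ((w ⬝ᵥ v) / (1 + w ⬝ᵥ u)) • u := by
  rw [inv_one_add_vecMulVec u w h, sub_mulVec, one_mulVec, smul_mulVec, vecMulVec_mulVec,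
    op_smul_eq_smul, smul_smul, inv_mul_eq_div]

end RankOne

section Conjugate

variable {R K ι n : Type*} [Fintype ι] [Fintype n]

theorem dotProduct_mulVec_sum_of_pairwise [CommSemiring R] (Q : Matrix n n R) {p : ι → n → R}
    (hp : Pairwise fun i j => p i ⬝ᵥ Q *ᵥ p j = 0) (c : ι → R) (j : ι) :
    p j ⬝ᵥ Q *ᵥ ∑ i, c i • p i = c j * (p j ⬝ᵥ Q *ᵥ p j) := by
  simp_rw [mulVec_sum, mulVec_smul, dotProduct_sum, dotProduct_smul, smul_eq_mul]
  exact Finset.sum_eq_single j (fun i _ hij => by rw [hp hij.symm, mul_zero])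
    (fun hj => absurd (Finset.mem_univ j) hj)

theorem sum_dotProduct_mulVec_sum_of_pairwise [CommSemiring R] (Q : Matrix n n R)
    {p : ι → n → R} (hp : Pairwise fun i j => p i ⬝ᵥ Q *ᵥ p j = 0) (c : ι → R) :
    (∑ i, c i • p i) ⬝ᵥ Q *ᵥ ∑ i, c i • p i = ∑ i, c i ^ 2 * (p i ⬝ᵥ Q *ᵥ p i) := by
  simp_rw [sum_dotProduct, smul_dotProduct, dotProduct_mulVec_sum_of_pairwise Q hp, smul_eq_mul,
    ← mul_assoc, sq]

variable [Field K] [DecidableEq n]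

theorem inv_one_add_smul_vecMulVec_mul_mulVec (Q : Matrix n n K) (u v : n → K) (lam : K)
    (h : 1 + lam * (u ⬝ᵥ Q *ᵥ u) ≠ 0) :
    (1 + lam • (vecMulVec u u * Q))⁻¹ *ᵥ v
      = v - (lam * (u ⬝ᵥ Q *ᵥ v) / (1 + lam * (u ⬝ᵥ Q *ᵥ u))) • u := by
  have hdot : ∀ y, (lam • (u ᵥ* Q)) ⬝ᵥ y = lam * (u ⬝ᵥ Q *ᵥ y) := fun y => by
    rw [smul_dotProduct, dotProduct_mulVec, smul_eq_mul]
  rw [vecMulVec_mul, ← vecMulVec_smul, inv_one_add_vecMulVec_mulVec _ _ _ (by rwa [hdot]),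
    hdot, hdot]

theorem inv_one_add_smul_vecMulVec_mul_mulVec_sum [DecidableEq ι] (Q : Matrix n n K)
    {p : ι → n → K} (hp : Pairwise fun i j => p i ⬝ᵥ Q *ᵥ p j = 0) (c : ι → K) (lam : K)
    (j : ι) (h : 1 + lam * (p j ⬝ᵥ Q *ᵥ p j) ≠ 0) :
    (1 + lam • (vecMulVec (p j) (p j) * Q))⁻¹ *ᵥ ∑ i, c i • p i
      = ∑ i, Function.update c j (c j / (1 + lam * (p j ⬝ᵥ Q *ᵥ p j))) i • p i := by
  rw [inv_one_add_smul_vecMulVec_mul_mulVec Q _ _ lam h, dotProduct_mulVec_sum_of_pairwise Q hp]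
  set d := p j ⬝ᵥ Q *ᵥ p j
  rw [Fintype.sum_eq_add_sum_compl j, Fintype.sum_eq_add_sum_compl j, Function.update_self]
  have hrest : ∑ i ∈ {j}ᶜ, Function.update c j (c j / (1 + lam * d)) i • p i
      = ∑ i ∈ {j}ᶜ, c i • p i :=
    Finset.sum_congr rfl fun i hi => by rw [Function.update_of_ne (by simpa using hi)]
  rw [hrest]
  match_scalars
  · field_simp
    ring
  · rfl

end Conjugate

end Matrix

theorem dppm_iterate_eq_sum {K n : Type*} [Field K] [Fintype n] [DecidableEq n] {k : ℕ}
    (Q : Matrix n n K) {p : Fin k → n → K}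
    (hp : Pairwise fun i j => p i ⬝ᵥ Q *ᵥ p j = 0) (lam : K)
    (hden : ∀ i, 1 + lam * (p i ⬝ᵥ Q *ᵥ p i) ≠ 0) (b : Fin k → K) (x : ℕ → n → K)
    (hx0 : x 0 = ∑ i, b i • p i)
    (hupd : ∀ j : Fin k, x (j + 1) = (1 + lam • (vecMulVec (p j) (p j) * Q))⁻¹ *ᵥ x j) :
    ∀ j ≤ k, x j =
      ∑ i : Fin k, (if (i : ℕ) < j then b i / (1 + lam * (p i ⬝ᵥ Q *ᵥ p i)) else b i) • p i
  | 0, _ => by simpa using hx0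
  | j + 1, hj => by
    rw [hupd ⟨j, hj⟩, dppm_iterate_eq_sum Q hp lam hden b x hx0 hupd j (Nat.le_of_succ_le hj),
      inv_one_add_smul_vecMulVec_mul_mulVec_sum Q hp _ lam _ (hden _)]
    congr! 2 with i
    simp only [Function.update_apply, Fin.ext_iff]
    split_ifs <;> first | omega | (subst_vars; rfl)

theorem sqrt_sum_div_sq_mul_le {ι : Type*} [Fintype ι] {a : ℝ} (ha : 0 < a) (b d e : ι → ℝ)
    (hd : ∀ i, 0 ≤ d i) (he : ∀ i, a ≤ e i) :
    √(∑ i, (b i / e i) ^ 2 * d i) ≤ 1 / a * √(∑ i, b i ^ 2 * d i) := by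
  rw [← Real.sqrt_sq (one_div_pos.2 ha).le, ← Real.sqrt_mul (sq_nonneg _), Finset.mul_sum]
  refine Real.sqrt_le_sqrt (Finset.sum_le_sum fun i _ => ?_)
  calc (b i / e i) ^ 2 * d i = b i ^ 2 / e i ^ 2 * d i := by rw [div_pow]
    _ ≤ b i ^ 2 / a ^ 2 * d i := by gcongr <;> first | exact hd i | exact he i
    _ = (1 / a) ^ 2 * (b i ^ 2 * d i) := by ring

theorem dppm_conjugate_cycle_contraction_general {n : ℕ}
    (Q : Matrix (Fin n) (Fin n) ℝ)
    (m : ℝ) (hm : 0 < m)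
    (hmlb : ∀ y : Fin n → ℝ, m * (y ⬝ᵥ y) ≤ y ⬝ᵥ Q.mulVec y)
    (p : Fin n → (Fin n → ℝ))
    (hpunit : ∀ i, p i ⬝ᵥ p i = 1)
    (hpconj : ∀ i j, i ≠ j → p i ⬝ᵥ Q.mulVec (p j) = 0)
    (lam : ℝ) (hlam : 0 < lam)
    (b : Fin n → ℝ)
    (x : ℕ → (Fin n → ℝ))
    (hx0 : x 0 = ∑ i : Fin n, b i • p i)
    (hupd : ∀ j : Fin n,
      x ((j : ℕ) + 1) = (1 + lam • (vecMulVec (p j) (p j) * Q))⁻¹.mulVec (x (j : ℕ))) :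
    x n = ∑ i : Fin n, (b i / (1 + lam * (p i ⬝ᵥ Q.mulVec (p i)))) • p i ∧
    Real.sqrt (x n ⬝ᵥ Q.mulVec (x n)) ≤
      (1 / (1 + lam * m)) * Real.sqrt (x 0 ⬝ᵥ Q.mulVec (x 0)) := by
  have hconj : Pairwise fun i j => p i ⬝ᵥ Q *ᵥ p j = 0 := hpconj
  have hm_le : ∀ i, m ≤ p i ⬝ᵥ Q *ᵥ p i := fun i => by simpa [hpunit i] using hmlb (p i)
  have hden_le : ∀ i, 1 + lam * m ≤ 1 + lam * (p i ⬝ᵥ Q *ᵥ p i) := fun i => by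
    gcongr; exact hm_le i
  have hxn : x n = ∑ i : Fin n, (b i / (1 + lam * (p i ⬝ᵥ Q *ᵥ p i))) • p i := by
    simpa using dppm_iterate_eq_sum Q hconj lam
      (fun i => (lt_of_lt_of_le (by positivity) (hden_le i)).ne') b x hx0 hupd n le_rfl
  refine ⟨hxn, ?_⟩
  rw [hxn, hx0, sum_dotProduct_mulVec_sum_of_pairwise Q hconj,
    sum_dotProduct_mulVec_sum_of_pairwise Q hconj]
  exact sqrt_sum_div_sq_mul_le (by positivity) _ _ _ (fun i => hm.le.trans (hm_le i)) hden_le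

/-- one full cycle of DPPM updates along Q-conjugate unit directions for a
strongly convex quadratic contracts the Q-norm by a factor `1/(1+λm)`. -/
theorem dppm_conjugate_cycle_contraction {n : ℕ}
    (Q : Matrix (Fin n) (Fin n) ℝ) (hQsymm : Q.IsSymm) (hQpd : Q.PosDef)
    (m : ℝ) (hm : 0 < m)
    (hmeig : ∃ y : Fin n → ℝ, y ≠ 0 ∧ Q.mulVec y = m • y)
    (hmlb : ∀ y : Fin n → ℝ, m * (y ⬝ᵥ y) ≤ y ⬝ᵥ Q.mulVec y)
    (p : Fin n → (Fin n → ℝ))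
    (hpunit : ∀ i, p i ⬝ᵥ p i = 1)
    (hpconj : ∀ i j, i ≠ j → p i ⬝ᵥ Q.mulVec (p j) = 0)
    (hpli : LinearIndependent ℝ p)
    (lam : ℝ) (hlam : 0 < lam)
    (b : Fin n → ℝ)
    (x : ℕ → (Fin n → ℝ))
    (hx0 : x 0 = ∑ i : Fin n, b i • p i)
    (hupd : ∀ j : Fin n,
      x ((j : ℕ) + 1) = (1 + lam • (vecMulVec (p j) (p j) * Q))⁻¹.mulVec (x (j : ℕ))) :
    x n = ∑ i : Fin n, (b i / (1 + lam * (p i ⬝ᵥ Q.mulVec (p i)))) • p i ∧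
    Real.sqrt (x n ⬝ᵥ Q.mulVec (x n)) ≤
      (1 / (1 + lam * m)) * Real.sqrt (x 0 ⬝ᵥ Q.mulVec (x 0)) :=
  dppm_conjugate_cycle_contraction_general Q m hm hmlb p hpunit hpconj lam hlam b x hx0 hupd
end

section
/- Let f(x) = ½xᵀQx with Q ∈ ℝ^{n×n} symmetric positive definite with smallest eigenvalue m > 0, and let {xᵏ} be the DPPM iterates with constant parameter λ > 0 and search directions cycling through a Q-conjugate unit-vector basis (so that x^{k+1} = (I + λ·p̄ₖp̄ₖᵀQ)⁻¹·xᵏ with p̄_{ln+i} = ±ḡ_i for a fixed Q-conjugate basis ḡ₁, …, ḡ_n). Then ‖x^{kn}‖_Q ≤ (1/(1 + λm))ᵏ·‖x⁰‖_Q for all k ≥ 0, the sequence {‖xᵏ‖_Q} is monotone nonincreasing and converges to 0, hence {xᵏ} converges to the optimal point x* = 0, and the convergence rate of the error sequence εₖ = ‖xᵏ‖_Q is R-linear with rate (1/(1 + λm))^{1/n}. -/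
/-!
Write `cᵢ(x) = gᵢᵀQx` for the coordinates of `x` with respect to the `Q`-conjugate basis `g`.
Then `‖x‖_Q² = ∑ cᵢ(x)² / gᵢᵀQgᵢ`, and by the Sherman–Morrison formula a DPPM step along `±gᵢ`
multiplies `cᵢ` by `1 / (1 + λ gᵢᵀQgᵢ) ≤ 1 / (1 + λm)` and leaves the other coordinates alone,
by conjugacy. So the `Q`-norm never increases, and each full cycle of `n` steps shrinks every
coordinate, hence the `Q`-norm, by the factor `1 / (1 + λm)`. Monotonicity between the ends of
the cycles turns this into the R-linear rate `(1 / (1 + λm)) ^ (1 / n)`.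
-/

open Matrix Filter Topology

section DPPM

variable {ι K : Type*} [Fintype ι] [DecidableEq ι] [Field K]

theorem Matrix.inv_one_add_vecMulVec_s16 {u w : ι → K} (h : 1 + w ⬝ᵥ u ≠ 0) :
    (1 + vecMulVec u w)⁻¹ = 1 - (1 + w ⬝ᵥ u)⁻¹ • vecMulVec u w := by
  refine inv_eq_right_inv ?_
  have hsq : vecMulVec u w * vecMulVec u w = (w ⬝ᵥ u) • vecMulVec u w := by
    rw [vecMulVec_mul_vecMulVec, vecMulVec_smul]
  have hc : 1 - (1 + w ⬝ᵥ u)⁻¹ * (1 + w ⬝ᵥ u) = 0 := by rw [inv_mul_cancel₀ h, sub_self]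
  calc (1 + vecMulVec u w) * (1 - (1 + w ⬝ᵥ u)⁻¹ • vecMulVec u w)
      = 1 + (1 - (1 + w ⬝ᵥ u)⁻¹ * (1 + w ⬝ᵥ u)) • vecMulVec u w := by
        rw [add_mul, one_mul, mul_sub, mul_one, mul_smul_comm, hsq, smul_smul]; module
    _ = 1 := by rw [hc, zero_smul, add_zero]

noncomputable def dppmStep (Q : Matrix ι ι K) (lam : K) (p x : ι → K) : ι → K :=
  (1 + lam • (vecMulVec p p * Q))⁻¹ *ᵥ x

theorem dppmStep_neg (Q : Matrix ι ι K) (lam : K) (p : ι → K) :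
    dppmStep Q lam (-p) = dppmStep Q lam p := by
  unfold dppmStep
  rw [neg_vecMulVec, vecMulVec_neg, neg_neg]

theorem dppmStep_eq {Q : Matrix ι ι K} {lam : K} {p : ι → K}
    (h : 1 + lam * (p ⬝ᵥ Q *ᵥ p) ≠ 0) (x : ι → K) :
    dppmStep Q lam p x = x - ((1 + lam * (p ⬝ᵥ Q *ᵥ p))⁻¹ * lam * (p ⬝ᵥ Q *ᵥ x)) • p := by
  have hw : ∀ v, (lam • (p ᵥ* Q)) ⬝ᵥ v = lam * (p ⬝ᵥ Q *ᵥ v) := fun v => by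
    rw [smul_dotProduct, dotProduct_mulVec, smul_eq_mul]
  rw [← hw] at h
  rw [dppmStep, vecMulVec_mul, ← vecMulVec_smul, inv_one_add_vecMulVec_s16 h, sub_mulVec,
    one_mulVec, smul_mulVec, vecMulVec_mulVec, hw, hw, op_smul_eq_smul, smul_smul, mul_assoc]

theorem dotProduct_mulVec_dppmStep {Q : Matrix ι ι K} {g : ι → ι → K}
    (hconj : ∀ i j, i ≠ j → g i ⬝ᵥ Q *ᵥ g j = 0) {lam : K} {i : ι}
    (h : 1 + lam * (g i ⬝ᵥ Q *ᵥ g i) ≠ 0) (x : ι → K) (j : ι) :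
    g j ⬝ᵥ Q *ᵥ dppmStep Q lam (g i) x =
      if j = i then (1 + lam * (g i ⬝ᵥ Q *ᵥ g i))⁻¹ * (g j ⬝ᵥ Q *ᵥ x) else g j ⬝ᵥ Q *ᵥ x := by
  rw [dppmStep_eq h, mulVec_sub, mulVec_smul, dotProduct_sub, dotProduct_smul, smul_eq_mul]
  split_ifs with hji
  · subst hji
    field_simp
    ring
  · rw [hconj j i hji, mul_zero, sub_zero]

theorem dotProduct_mulVec_succ_of_cyclic_dppm {n : ℕ} (hn : 0 < n) {Q : Matrix (Fin n) (Fin n) K}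
    {g : Fin n → Fin n → K} (hconj : ∀ i j, i ≠ j → g i ⬝ᵥ Q *ᵥ g j = 0) {lam : K}
    (hden : ∀ i, 1 + lam * (g i ⬝ᵥ Q *ᵥ g i) ≠ 0) {p x : ℕ → Fin n → K}
    (hp : ∀ k, p k = g ⟨k % n, Nat.mod_lt k hn⟩ ∨ p k = -g ⟨k % n, Nat.mod_lt k hn⟩)
    (hx : ∀ k, x (k + 1) = dppmStep Q lam (p k) (x k)) (k : ℕ) (i : Fin n) :
    g i ⬝ᵥ Q *ᵥ x (k + 1) = if (i : ℕ) = k % n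
      then (1 + lam * (g i ⬝ᵥ Q *ᵥ g i))⁻¹ * (g i ⬝ᵥ Q *ᵥ x k) else g i ⬝ᵥ Q *ᵥ x k := by
  set j : Fin n := ⟨k % n, Nat.mod_lt k hn⟩
  have hstep : x (k + 1) = dppmStep Q lam (g j) (x k) := by
    rcases hp k with h | h
    · rw [hx k, h]
    · rw [hx k, h, dppmStep_neg]
  rw [hstep, dotProduct_mulVec_dppmStep hconj (hden j)]
  by_cases h : (i : ℕ) = k % n
  · obtain rfl : i = j := Fin.ext h
    rw [if_pos rfl, if_pos h]
  · rw [if_neg (fun h' => h (congrArg Fin.val h')), if_neg h]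

end DPPM

theorem Matrix.dotProduct_mulVec_self_eq_sum_conj {ι K : Type*} [Fintype ι] [Field K]
    {Q : Matrix ι ι K} {g : ι → ι → K} (hgli : LinearIndependent K g)
    (hconj : ∀ i j, i ≠ j → g i ⬝ᵥ Q *ᵥ g j = 0) (x : ι → K) :
    x ⬝ᵥ Q *ᵥ x = ∑ i, (g i ⬝ᵥ Q *ᵥ x) ^ 2 / (g i ⬝ᵥ Q *ᵥ g i) := by
  let b := basisOfLinearIndependentOfCardEqFinrank' g hgli
    (Module.finrank_fintype_fun_eq_card K).symm
  have hb : ⇑b = g := coe_basisOfLinearIndependentOfCardEqFinrank' g hgli _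
  have hx : ∑ i, b.repr x i • g i = x := by rw [← hb]; exact b.sum_repr x
  have hcoord : ∀ j, g j ⬝ᵥ Q *ᵥ x = b.repr x j * (g j ⬝ᵥ Q *ᵥ g j) := fun j => by
    conv_lhs => rw [← hx]
    simp_rw [mulVec_sum, dotProduct_sum, mulVec_smul, dotProduct_smul, smul_eq_mul]
    exact Finset.sum_eq_single j (fun i _ hij => by rw [hconj j i hij.symm, mul_zero])
      (fun h => absurd (Finset.mem_univ j) h)
  calc x ⬝ᵥ Q *ᵥ x = ∑ i, b.repr x i * (g i ⬝ᵥ Q *ᵥ x) := by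
        nth_rewrite 1 [← hx]
        simp_rw [sum_dotProduct, smul_dotProduct, smul_eq_mul]
    _ = ∑ i, (g i ⬝ᵥ Q *ᵥ x) ^ 2 / (g i ⬝ᵥ Q *ᵥ g i) := by
        refine Finset.sum_congr rfl fun i _ => ?_
        rw [hcoord i]
        -- where `gᵢᵀQgᵢ = 0`, the coordinate `gᵢᵀQx` vanishes too, so `x / 0 = 0` is harmless
        rcases eq_or_ne (g i ⬝ᵥ Q *ᵥ g i) 0 with h | h
        · simp [h]
        · field_simp

theorem Real.sqrt_sum_sq_div_le {ι : Type*} [Fintype ι] {q a b : ι → ℝ} {r : ℝ}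
    (hq : ∀ i, 0 ≤ q i) (hr : 0 ≤ r) (h : ∀ i, |a i| ≤ r * |b i|) :
    √(∑ i, a i ^ 2 / q i) ≤ r * √(∑ i, b i ^ 2 / q i) := by
  rw [← Real.sqrt_sq hr, ← Real.sqrt_mul (sq_nonneg r), Finset.mul_sum]
  refine Real.sqrt_le_sqrt (Finset.sum_le_sum fun i _ => ?_)
  have hsq := pow_le_pow_left₀ (abs_nonneg _) (h i) 2
  rw [sq_abs, mul_pow, sq_abs] at hsq
  rw [← mul_div_assoc]
  exact div_le_div_of_nonneg_right hsq (hq i)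

theorem apply_mul_add_self_eq_of_cyclic_update {R : Type*} [Mul R] {n : ℕ} {s : Fin n → R}
    {y : ℕ → Fin n → R}
    (hy : ∀ k i, y (k + 1) i = if (i : ℕ) = k % n then s i * y k i else y k i) (k : ℕ)
    (i : Fin n) : y (k * n + n) i = s i * y (k * n) i := by
  suffices h : ∀ t ≤ n, y (k * n + t) i = if (i : ℕ) < t then s i * y (k * n) i else y (k * n) i by
    rw [h n le_rfl, if_pos i.isLt]
  intro t ht
  induction t with
  | zero => simp
  | succ t ih =>
    have hmod : (k * n + t) % n = t := by
      rw [Nat.mul_comm, Nat.mul_add_mod_self_left, Nat.mod_eq_of_lt ht]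
    rw [← add_assoc, hy, ih (by omega), hmod]
    rcases lt_trichotomy (i : ℕ) t with h | h | h
    · simp [h, h.ne, Nat.lt_succ_of_lt h]
    · simp [h]
    · simp [h.ne', h.not_gt, show ¬ (i : ℕ) < t + 1 by omega]

theorem sqrt_sum_sq_div_antitone_and_le_pow_of_cyclic_update {n : ℕ} {q s : Fin n → ℝ} {ρ : ℝ}
    (hq : ∀ i, 0 ≤ q i) (hρ0 : 0 ≤ ρ) (hρ1 : ρ ≤ 1) (hs : ∀ i, |s i| ≤ ρ)
    {y : ℕ → Fin n → ℝ}
    (hy : ∀ k i, y (k + 1) i = if (i : ℕ) = k % n then s i * y k i else y k i) :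
    Antitone (fun k => √(∑ i, y k i ^ 2 / q i)) ∧
      ∀ k, √(∑ i, y (k * n) i ^ 2 / q i) ≤ ρ ^ k * √(∑ i, y 0 i ^ 2 / q i) := by
  refine ⟨antitone_nat_of_succ_le fun k => ?_, fun k => ?_⟩
  · simpa using Real.sqrt_sum_sq_div_le hq zero_le_one fun i => by
      rw [hy, one_mul]
      split_ifs
      · rw [abs_mul]
        exact mul_le_of_le_one_left (abs_nonneg _) ((hs i).trans hρ1)
      · rfl
  · induction k with
    | zero => simp
    | succ k ih =>
      calc √(∑ i, y ((k + 1) * n) i ^ 2 / q i) ≤ ρ * √(∑ i, y (k * n) i ^ 2 / q i) := by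
            refine Real.sqrt_sum_sq_div_le hq hρ0 fun i => ?_
            rw [add_one_mul, apply_mul_add_self_eq_of_cyclic_update hy, abs_mul]
            exact mul_le_mul_of_nonneg_right (hs i) (abs_nonneg _)
        _ ≤ ρ * (ρ ^ k * √(∑ i, y 0 i ^ 2 / q i)) := mul_le_mul_of_nonneg_left ih hρ0
        _ = ρ ^ (k + 1) * √(∑ i, y 0 i ^ 2 / q i) := by ring

theorem pow_div_le_inv_mul_rpow_inv_pow {ρ : ℝ} (hρ0 : 0 < ρ) (hρ1 : ρ ≤ 1) {n : ℕ} (hn : 0 < n)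
    (k : ℕ) : ρ ^ (k / n) ≤ ρ⁻¹ * (ρ ^ (n : ℝ)⁻¹) ^ k := by
  have hk : (k : ℝ) / n - 1 ≤ ((k / n : ℕ) : ℝ) := by
    have h : k ≤ (k / n + 1) * n := by rw [add_one_mul]; exact (Nat.lt_div_mul_add hn).le
    have hnR : (0 : ℝ) < n := by exact_mod_cast hn
    rw [sub_le_iff_le_add, div_le_iff₀ hnR]
    exact_mod_cast h
  calc ρ ^ (k / n) = ρ ^ (((k / n : ℕ) : ℝ)) := (Real.rpow_natCast ρ _).symm
    _ ≤ ρ ^ ((k : ℝ) / n - 1) := Real.rpow_le_rpow_of_exponent_ge hρ0 hρ1 hk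
    _ = ρ⁻¹ * (ρ ^ (n : ℝ)⁻¹) ^ k := by
        rw [Real.rpow_sub hρ0, Real.rpow_one, ← Real.rpow_natCast, ← Real.rpow_mul hρ0.le,
          div_eq_inv_mul, div_eq_inv_mul, mul_comm]

theorem Antitone.exists_le_mul_rpow_inv_pow {e : ℕ → ℝ} (he : Antitone e) {n : ℕ} (hn : 0 < n)
    {ρ : ℝ} (hρ0 : 0 < ρ) (hρ1 : ρ ≤ 1) (he0 : 0 ≤ e 0) (hcyc : ∀ k, e (k * n) ≤ ρ ^ k * e 0) :
    ∃ C : ℝ, 0 < C ∧ ∀ k, e k ≤ C * (ρ ^ (n : ℝ)⁻¹) ^ k := by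
  refine ⟨ρ⁻¹ * e 0 + 1, by positivity, fun k => ?_⟩
  have hpow : 0 ≤ (ρ ^ (n : ℝ)⁻¹) ^ k := by positivity
  calc e k ≤ e (k / n * n) := he (Nat.div_mul_le_self k n)
    _ ≤ ρ ^ (k / n) * e 0 := hcyc _
    _ ≤ ρ⁻¹ * (ρ ^ (n : ℝ)⁻¹) ^ k * e 0 :=
        mul_le_mul_of_nonneg_right (pow_div_le_inv_mul_rpow_inv_pow hρ0 hρ1 hn k) he0
    _ ≤ (ρ⁻¹ * e 0 + 1) * (ρ ^ (n : ℝ)⁻¹) ^ k := by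
        rw [add_one_mul, mul_right_comm]
        exact le_add_of_nonneg_right hpow

theorem Matrix.tendsto_zero_of_tendsto_sqrt_dotProduct_mulVec {ι : Type*} [Fintype ι]
    {Q : Matrix ι ι ℝ} {m : ℝ} (hm : 0 < m) (hmlb : ∀ y : ι → ℝ, m * (y ⬝ᵥ y) ≤ y ⬝ᵥ Q *ᵥ y)
    {x : ℕ → ι → ℝ} (hx : Tendsto (fun k => √(x k ⬝ᵥ Q *ᵥ x k)) atTop (𝓝 0)) :
    Tendsto x atTop (𝓝 0) := by
  have hbound : ∀ (y : ι → ℝ) i, |y i| ≤ √(y ⬝ᵥ Q *ᵥ y) / √m := fun y i => by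
    rw [← Real.sqrt_div' _ hm.le]
    refine Real.abs_le_sqrt ?_
    rw [le_div_iff₀ hm, mul_comm]
    refine le_trans (mul_le_mul_of_nonneg_left ?_ hm.le) (hmlb y)
    simpa [dotProduct, sq] using
      Finset.single_le_sum (fun j _ => mul_self_nonneg (y j)) (Finset.mem_univ i)
  refine tendsto_pi_nhds.2 fun i => squeeze_zero_norm (fun k => hbound (x k) i) ?_
  simpa using hx.div_const √m

theorem dppm_quadratic_R_linear_general {n : ℕ} (hn : 0 < n)
    (Q : Matrix (Fin n) (Fin n) ℝ)
    (m : ℝ) (hm : 0 < m)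
    (hmlb : ∀ y : Fin n → ℝ, m * (y ⬝ᵥ y) ≤ y ⬝ᵥ Q.mulVec y)
    (g : Fin n → (Fin n → ℝ))
    (hgunit : ∀ i, g i ⬝ᵥ g i = 1)
    (hgconj : ∀ i j, i ≠ j → g i ⬝ᵥ Q.mulVec (g j) = 0)
    (hgli : LinearIndependent ℝ g)
    (lam : ℝ) (hlam : 0 < lam)
    (p : ℕ → (Fin n → ℝ))
    (hp : ∀ k : ℕ, p k = g ⟨k % n, Nat.mod_lt k hn⟩ ∨ p k = -g ⟨k % n, Nat.mod_lt k hn⟩)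
    (x : ℕ → (Fin n → ℝ))
    (hupd : ∀ k : ℕ, x (k + 1) = (1 + lam • (vecMulVec (p k) (p k) * Q))⁻¹.mulVec (x k)) :
    (∀ k : ℕ, Real.sqrt (x (k * n) ⬝ᵥ Q.mulVec (x (k * n))) ≤
        (1 / (1 + lam * m)) ^ k * Real.sqrt (x 0 ⬝ᵥ Q.mulVec (x 0))) ∧
    (Antitone fun k : ℕ => Real.sqrt (x k ⬝ᵥ Q.mulVec (x k))) ∧
    Tendsto (fun k : ℕ => Real.sqrt (x k ⬝ᵥ Q.mulVec (x k))) atTop (𝓝 0) ∧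
    Tendsto x atTop (𝓝 0) ∧
    (∃ C : ℝ, 0 < C ∧ ∀ k : ℕ,
      Real.sqrt (x k ⬝ᵥ Q.mulVec (x k)) ≤
        C * ((1 / (1 + lam * m)) ^ ((n : ℝ)⁻¹)) ^ k) := by
  set q : Fin n → ℝ := fun i => g i ⬝ᵥ Q *ᵥ g i
  set ρ : ℝ := 1 / (1 + lam * m)
  have hqm : ∀ i, m ≤ q i := fun i => by simpa [hgunit i] using hmlb (g i)
  have hρ0 : 0 < ρ := by positivity
  have hρ1 : ρ < 1 := (div_lt_one (by positivity)).2 (by nlinarith)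
  have hden : ∀ i, 0 < 1 + lam * q i := fun i => by nlinarith [hqm i]
  have hsρ : ∀ i, |(1 + lam * q i)⁻¹| ≤ ρ := fun i => by
    rw [abs_of_pos (inv_pos.2 (hden i)), ← one_div]
    exact one_div_le_one_div_of_le (by positivity) (by nlinarith [hqm i])
  have hstep := dotProduct_mulVec_succ_of_cyclic_dppm hn hgconj (fun i => (hden i).ne') hp hupd
  have hnorm : ∀ k, √(x k ⬝ᵥ Q *ᵥ x k) = √(∑ i, (g i ⬝ᵥ Q *ᵥ x k) ^ 2 / q i) := fun k => by
    rw [dotProduct_mulVec_self_eq_sum_conj hgli hgconj]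
  obtain ⟨hanti, hcyc⟩ := sqrt_sum_sq_div_antitone_and_le_pow_of_cyclic_update
    (y := fun k i => g i ⬝ᵥ Q *ᵥ x k) (fun i => hm.le.trans (hqm i)) hρ0.le hρ1.le hsρ hstep
  simp only [← hnorm] at hanti hcyc
  obtain ⟨C, hC, hlin⟩ := hanti.exists_le_mul_rpow_inv_pow hn hρ0 hρ1.le (Real.sqrt_nonneg _) hcyc
  have htend : Tendsto (fun k => √(x k ⬝ᵥ Q *ᵥ x k)) atTop (𝓝 0) := by
    refine squeeze_zero (fun k => Real.sqrt_nonneg _) hlin ?_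
    simpa using (tendsto_pow_atTop_nhds_zero_of_lt_one (by positivity)
      (Real.rpow_lt_one hρ0.le hρ1 (by positivity))).const_mul C
  exact ⟨hcyc, hanti, htend, tendsto_zero_of_tendsto_sqrt_dotProduct_mulVec hm hmlb htend,
    C, hC, hlin⟩

/-- R-linear convergence of the DPPM with constant parameter and cyclic
Q-conjugate search directions for a strongly convex quadratic
(Proposition 2(i) of the paper). -/
theorem dppm_quadratic_R_linear {n : ℕ} (hn : 0 < n)
    (Q : Matrix (Fin n) (Fin n) ℝ) (hQsymm : Q.IsSymm) (hQpd : Q.PosDef)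
    (m : ℝ) (hm : 0 < m)
    (hmeig : ∃ y : Fin n → ℝ, y ≠ 0 ∧ Q.mulVec y = m • y)
    (hmlb : ∀ y : Fin n → ℝ, m * (y ⬝ᵥ y) ≤ y ⬝ᵥ Q.mulVec y)
    (g : Fin n → (Fin n → ℝ))
    (hgunit : ∀ i, g i ⬝ᵥ g i = 1)
    (hgconj : ∀ i j, i ≠ j → g i ⬝ᵥ Q.mulVec (g j) = 0)
    (hgli : LinearIndependent ℝ g)
    (lam : ℝ) (hlam : 0 < lam)
    (p : ℕ → (Fin n → ℝ))
    (hp : ∀ k : ℕ, p k = g ⟨k % n, Nat.mod_lt k hn⟩ ∨ p k = -g ⟨k % n, Nat.mod_lt k hn⟩)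
    (x : ℕ → (Fin n → ℝ))
    (hupd : ∀ k : ℕ, x (k + 1) = (1 + lam • (vecMulVec (p k) (p k) * Q))⁻¹.mulVec (x k)) :
    (∀ k : ℕ, Real.sqrt (x (k * n) ⬝ᵥ Q.mulVec (x (k * n))) ≤
        (1 / (1 + lam * m)) ^ k * Real.sqrt (x 0 ⬝ᵥ Q.mulVec (x 0))) ∧
    (Antitone fun k : ℕ => Real.sqrt (x k ⬝ᵥ Q.mulVec (x k))) ∧
    Tendsto (fun k : ℕ => Real.sqrt (x k ⬝ᵥ Q.mulVec (x k))) atTop (𝓝 0) ∧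
    Tendsto x atTop (𝓝 0) ∧
    (∃ C : ℝ, 0 < C ∧ ∀ k : ℕ,
      Real.sqrt (x k ⬝ᵥ Q.mulVec (x k)) ≤
        C * ((1 / (1 + lam * m)) ^ ((n : ℝ)⁻¹)) ^ k) :=
  dppm_quadratic_R_linear_general hn Q m hm hmlb g hgunit hgconj hgli lam hlam p hp x hupd
end

section
/- Let f(x) = ½xᵀQx with Q ∈ ℝ^{n×n} symmetric positive definite with smallest eigenvalue m > 0, and let {xᵏ} be the DPPM iterates with search directions cycling through a Q-conjugate unit-vector basis and with iteration-dependent parameter λ(k) > 0 that is monotone nondecreasing in k, so that x^{k+1} = (I + λ(k)·p̄ₖp̄ₖᵀQ)⁻¹·xᵏ. If there exists c > 1 with λ((k+1)n)/λ(kn) ≥ c for all k ≥ 0, then ‖x^{(k+1)n}‖_Q / ‖x^{kn}‖_Q ≤ 1/(1 + cᵏ·λ(0)·m) for all k ≥ 0; hence the ratio of successive cycle errors tends to 0, the sequence {xᵏ} converges to the optimal point x* = 0, and the convergence is R-superlinear. -/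
/-! In a basis of `Q`-conjugate directions the DPPM step along `±gᵢ` is a rank-one perturbation of
the identity whose inverse (Sherman–Morrison) divides the `i`-th coordinate by
`1 + λ gᵢᵀQgᵢ ≥ 1 + λm` and fixes the others, while `‖y‖²_Q = ∑ⱼ (gⱼᵀQgⱼ) yⱼ²`. Over the `k`-th
cycle every coordinate is divided once, by at least `1 + λ(kn)m ≥ 1 + cᵏλ(0)m`; the product of
these factors dominates the cycle errors and has successive ratios tending to `0`. -/

open Matrix Filter Topology

namespace Matrix

variable {ι K : Type*} [Fintype ι] [Field K]

theorem inv_one_add_smul_of_mul_self_eq_smul [DecidableEq ι] {M : Matrix ι ι K} {q t : K}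
    (hM : M * M = q • M) (ht : 1 + t * q ≠ 0) :
    (1 + t • M)⁻¹ = 1 - (t / (1 + t * q)) • M := by
  apply inv_eq_right_inv
  have hcoef : t - t / (1 + t * q) - t * (t / (1 + t * q)) * q = 0 := by
    field_simp
    ring
  calc (1 + t • M) * (1 - (t / (1 + t * q)) • M)
      = 1 + (t - t / (1 + t * q) - t * (t / (1 + t * q)) * q) • M := by
        simp only [mul_sub, add_mul, mul_one, one_mul, smul_mul_smul_comm, hM, smul_smul,
          sub_smul]
        abel
    _ = 1 := by rw [hcoef, zero_smul, add_zero]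

theorem vecMulVec_self_mul_mul_self (g : ι → K) (Q : Matrix ι ι K) :
    vecMulVec g g * Q * (vecMulVec g g * Q) = (g ⬝ᵥ Q *ᵥ g) • (vecMulVec g g * Q) := by
  rw [vecMulVec_mul, vecMulVec_mul_vecMulVec, vecMulVec_smul, dotProduct_mulVec]

theorem vecMulVec_self_mul_mulVec (g : ι → K) (Q : Matrix ι ι K) (y : ι → K) :
    (vecMulVec g g * Q) *ᵥ y = (g ⬝ᵥ Q *ᵥ y) • g := by
  rw [← mulVec_mulVec, vecMulVec_mulVec, op_smul_eq_smul]

end Matrix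

namespace Module.Basis

section CommRing

variable {ι R : Type*} [Fintype ι] [CommRing R] (b : Basis ι R (ι → R)) {Q : Matrix ι ι R}

theorem dotProduct_mulVec_eq_mul_repr (hQ : ∀ i j, i ≠ j → b i ⬝ᵥ Q *ᵥ b j = 0)
    (i : ι) (y : ι → R) : b i ⬝ᵥ Q *ᵥ y = (b i ⬝ᵥ Q *ᵥ b i) * b.repr y i := by
  classical
  conv_lhs => rw [← b.sum_repr y]
  rw [mulVec_sum, dotProduct_sum, Finset.sum_eq_single i (fun j _ hji => by
    rw [mulVec_smul, dotProduct_smul, hQ i j hji.symm, smul_zero]) (by simp)]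
  rw [mulVec_smul, dotProduct_smul, smul_eq_mul, mul_comm]

theorem dotProduct_mulVec_self_eq_sum (hQ : ∀ i j, i ≠ j → b i ⬝ᵥ Q *ᵥ b j = 0)
    (y : ι → R) : y ⬝ᵥ Q *ᵥ y = ∑ j, (b j ⬝ᵥ Q *ᵥ b j) * b.repr y j ^ 2 := by
  calc y ⬝ᵥ Q *ᵥ y = (∑ j, b.repr y j • b j) ⬝ᵥ Q *ᵥ y := by rw [b.sum_repr]
    _ = ∑ j, b.repr y j * (b j ⬝ᵥ Q *ᵥ y) := by
      simp only [sum_dotProduct, smul_dotProduct, smul_eq_mul]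
    _ = ∑ j, (b j ⬝ᵥ Q *ᵥ b j) * b.repr y j ^ 2 :=
      Finset.sum_congr rfl fun j _ => by rw [b.dotProduct_mulVec_eq_mul_repr hQ j y]; ring

end CommRing

theorem repr_inv_one_add_smul_vecMulVec_self_mul_mulVec {ι K : Type*} [Fintype ι] [DecidableEq ι]
    [Field K] (b : Basis ι K (ι → K)) {Q : Matrix ι ι K}
    (hQ : ∀ i j, i ≠ j → b i ⬝ᵥ Q *ᵥ b j = 0) {i : ι} {t : K}
    (ht : 1 + t * (b i ⬝ᵥ Q *ᵥ b i) ≠ 0) (y : ι → K) (j : ι) :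
    b.repr ((1 + t • (vecMulVec (b i) (b i) * Q))⁻¹ *ᵥ y) j =
      (if j = i then (1 + t * (b i ⬝ᵥ Q *ᵥ b i))⁻¹ else 1) * b.repr y j := by
  rw [inv_one_add_smul_of_mul_self_eq_smul (vecMulVec_self_mul_mul_self _ _) ht, sub_mulVec,
    one_mulVec, smul_mulVec, vecMulVec_self_mul_mulVec, b.dotProduct_mulVec_eq_mul_repr hQ i y,
    smul_smul, map_sub, map_smul, repr_self]
  split_ifs with hji
  · subst hji
    simp only [Finsupp.coe_sub, Finsupp.coe_smul, Pi.sub_apply, Pi.smul_apply,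
      Finsupp.single_eq_same, smul_eq_mul]
    field_simp
    ring
  · simp [Finsupp.single_eq_of_ne hji]

theorem sqrt_dotProduct_mulVec_le {ι : Type*} [Fintype ι] (b : Basis ι ℝ (ι → ℝ))
    {Q : Matrix ι ι ℝ} (hQ : ∀ i j, i ≠ j → b i ⬝ᵥ Q *ᵥ b j = 0)
    (hq : ∀ j, 0 ≤ b j ⬝ᵥ Q *ᵥ b j) {y z : ι → ℝ} {t : ℝ} (ht : 0 ≤ t)
    (h : ∀ j, |b.repr z j| ≤ t * |b.repr y j|) :
    √(z ⬝ᵥ Q *ᵥ z) ≤ t * √(y ⬝ᵥ Q *ᵥ y) := by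
  have hsq : z ⬝ᵥ Q *ᵥ z ≤ t ^ 2 * (y ⬝ᵥ Q *ᵥ y) := by
    rw [b.dotProduct_mulVec_self_eq_sum hQ, b.dotProduct_mulVec_self_eq_sum hQ, Finset.mul_sum]
    refine Finset.sum_le_sum fun j _ => ?_
    have hj : b.repr z j ^ 2 ≤ (t * b.repr y j) ^ 2 := by
      rw [← sq_abs, ← sq_abs (t * _), abs_mul, abs_of_nonneg ht]
      exact pow_le_pow_left₀ (abs_nonneg _) (h j) 2
    nlinarith [mul_le_mul_of_nonneg_left hj (hq j)]
  calc √(z ⬝ᵥ Q *ᵥ z) ≤ √(t ^ 2 * (y ⬝ᵥ Q *ᵥ y)) := Real.sqrt_le_sqrt hsq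
    _ = t * √(y ⬝ᵥ Q *ᵥ y) := by rw [Real.sqrt_mul (sq_nonneg t), Real.sqrt_sq ht]

theorem tendsto_zero_of_forall_tendsto_repr {ι R E α : Type*} [Fintype ι] [Semiring R]
    [TopologicalSpace R] [AddCommMonoid E] [Module R E] [TopologicalSpace E] [ContinuousAdd E]
    [ContinuousSMul R E] (b : Basis ι R E) {l : Filter α} {x : α → E}
    (h : ∀ j, Tendsto (fun k => b.repr (x k) j) l (𝓝 0)) : Tendsto x l (𝓝 0) := by
  simpa [b.sum_repr] using tendsto_finsetSum Finset.univ fun j _ => (h j).smul_const (b j)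

end Module.Basis

theorem repr_dppm_succ {n : ℕ} (hn : 0 < n) (b : Module.Basis (Fin n) ℝ (Fin n → ℝ))
    {Q : Matrix (Fin n) (Fin n) ℝ} (hQ : ∀ i j, i ≠ j → b i ⬝ᵥ Q *ᵥ b j = 0)
    (hq : ∀ j, 0 ≤ b j ⬝ᵥ Q *ᵥ b j) {lam : ℕ → ℝ} (hlam : ∀ k, 0 ≤ lam k)
    {p x : ℕ → Fin n → ℝ}
    (hp : ∀ k, p k = b ⟨k % n, Nat.mod_lt k hn⟩ ∨ p k = -b ⟨k % n, Nat.mod_lt k hn⟩)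
    (hupd : ∀ k, x (k + 1) = (1 + lam k • (vecMulVec (p k) (p k) * Q))⁻¹ *ᵥ x k)
    (k : ℕ) (j : Fin n) :
    b.repr (x (k + 1)) j =
      (if (j : ℕ) = k % n then (1 + lam k * (b j ⬝ᵥ Q *ᵥ b j))⁻¹ else 1) * b.repr (x k) j := by
  set i : Fin n := ⟨k % n, Nat.mod_lt k hn⟩
  have hpp : vecMulVec (p k) (p k) = vecMulVec (b i) (b i) := by
    rcases hp k with h | h <;> simp [h, i]
  rw [hupd, hpp, b.repr_inv_one_add_smul_vecMulVec_self_mul_mulVec hQ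
    (add_pos_of_pos_of_nonneg one_pos (mul_nonneg (hlam k) (hq i))).ne']
  by_cases hji : j = i
  · simp [hji, i]
  · have hjk : (j : ℕ) ≠ k % n := fun h => hji (Fin.ext h)
    simp [hji, hjk]

theorem cyclic_scaling_eq {M : Type*} [Monoid M] {n : ℕ} {a s : ℕ → Fin n → M}
    (h : ∀ k j, a (k + 1) j = (if (j : ℕ) = k % n then s k j else 1) * a k j) (k : ℕ)
    (j : Fin n) : a ((k + 1) * n) j = s (k * n + j) j * a (k * n) j := by
  have partial_cycle : ∀ r ≤ n,
      a (k * n + r) j = (if (j : ℕ) < r then s (k * n + j) j else 1) * a (k * n) j := by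
    intro r
    induction r with
    | zero => simp
    | succ r ih =>
      intro (hr : r < n)
      have hmod : (k * n + r) % n = r := by
        rw [Nat.mul_comm, Nat.mul_add_mod, Nat.mod_eq_of_lt hr]
      rw [← add_assoc, h, hmod, ih hr.le]
      rcases lt_trichotomy (j : ℕ) r with hj | rfl | hj
      · simp [hj, hj.ne, Nat.lt_succ_of_lt hj]
      · simp
      · simp [hj.ne', not_lt_of_gt hj, not_le_of_gt hj]
  simpa [add_mul] using partial_cycle n le_rfl

theorem abs_cyclic_scaling_succ_le {n : ℕ} {a s : ℕ → Fin n → ℝ}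
    (h : ∀ k j, a (k + 1) j = (if (j : ℕ) = k % n then s k j else 1) * a k j)
    (hs : ∀ k j, |s k j| ≤ 1) (k : ℕ) (j : Fin n) : |a (k + 1) j| ≤ |a k j| := by
  rw [h, abs_mul]
  refine mul_le_of_le_one_left (abs_nonneg _) ?_
  split_ifs
  exacts [hs k j, abs_one.le]

theorem abs_cyclic_scaling_le {n : ℕ} {a s : ℕ → Fin n → ℝ}
    (h : ∀ k j, a (k + 1) j = (if (j : ℕ) = k % n then s k j else 1) * a k j) {t : ℕ → ℝ}
    (hs : ∀ k (j : Fin n), |s (k * n + j) j| ≤ t k) (k : ℕ) (j : Fin n) :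
    |a ((k + 1) * n) j| ≤ t k * |a (k * n) j| := by
  rw [cyclic_scaling_eq h, abs_mul]
  exact mul_le_mul_of_nonneg_right (hs k j) (abs_nonneg _)

theorem abs_inv_le_inv_of_le {t u : ℝ} (ht : 0 < t) (h : t ≤ u) : |u⁻¹| ≤ t⁻¹ := by
  rw [abs_inv, abs_of_pos (ht.trans_le h)]
  exact inv_anti₀ ht h

theorem pow_mul_le_of_le_div_of_monotone {lam : ℕ → ℝ} {n : ℕ} {c : ℝ} (hc : 0 ≤ c)
    (hpos : ∀ k, 0 < lam k) (hmono : Monotone lam)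
    (hratio : ∀ k, c ≤ lam ((k + 1) * n) / lam (k * n)) (k i : ℕ) :
    c ^ k * lam 0 ≤ lam (k * n + i) := by
  refine le_trans ?_ (hmono (Nat.le_add_right _ i))
  induction k with
  | zero => simp
  | succ k ih =>
    calc c ^ (k + 1) * lam 0 = c * (c ^ k * lam 0) := by ring
      _ ≤ c * lam (k * n) := mul_le_mul_of_nonneg_left ih hc
      _ ≤ lam ((k + 1) * n) := (le_div_iff₀ (hpos _)).1 (hratio k)

theorem exists_dominating_ratio_tendsto_zero {u r : ℕ → ℝ} (hr : ∀ k, 0 < r k)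
    (hu : ∀ k, u (k + 1) ≤ r k * u k) (hr0 : Tendsto r atTop (𝓝 0)) :
    ∃ δ : ℕ → ℝ, (∀ k, 0 < δ k) ∧ (∀ k, u k ≤ δ k) ∧
      Tendsto (fun k => δ (k + 1) / δ k) atTop (𝓝 0) := by
  set δ : ℕ → ℝ := fun k => (|u 0| + 1) * ∏ l ∈ Finset.range k, r l
  have hδpos : ∀ k, 0 < δ k := fun k =>
    mul_pos (by positivity) (Finset.prod_pos fun l _ => hr l)
  have hδsucc : ∀ k, δ (k + 1) = r k * δ k := fun k => by
    simp only [δ, Finset.prod_range_succ]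
    ring
  refine ⟨δ, hδpos, fun k => ?_, ?_⟩
  · induction k with
    | zero => simpa [δ] using (le_abs_self (u 0)).trans (lt_add_one _).le
    | succ k ih =>
      rw [hδsucc]
      exact (hu k).trans (mul_le_mul_of_nonneg_left ih (hr k).le)
  · simpa [hδsucc, mul_div_assoc, div_self (hδpos _).ne'] using hr0

theorem tendsto_zero_of_le_mul_of_tendsto_zero {u r : ℕ → ℝ} (hu : ∀ k, 0 ≤ u k)
    (hr : ∀ k, 0 < r k) (hle : ∀ k, u (k + 1) ≤ r k * u k) (hr0 : Tendsto r atTop (𝓝 0)) :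
    Tendsto u atTop (𝓝 0) := by
  obtain ⟨δ, hδpos, huδ, hδ0⟩ := exists_dominating_ratio_tendsto_zero hr hle hr0
  have hδ : Summable δ := summable_of_ratio_test_tendsto_lt_one zero_lt_one
    (Eventually.of_forall fun k => (hδpos k).ne')
    (by simpa [Real.norm_eq_abs, abs_of_pos (hδpos _)] using hδ0)
  exact squeeze_zero hu huδ hδ.tendsto_atTop_zero

theorem tendsto_zero_of_abs_antitone_of_subseq {u : ℕ → ℝ} {n : ℕ} (hn : 0 < n)
    (hstep : ∀ k, |u (k + 1)| ≤ |u k|) (hsub : Tendsto (fun k => |u (k * n)|) atTop (𝓝 0)) :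
    Tendsto u atTop (𝓝 0) :=
  squeeze_zero_norm
    (fun k => antitone_nat_of_succ_le (f := fun k => |u k|) hstep (Nat.div_mul_le_self k n))
    (hsub.comp (map_div_atTop_eq_nat n hn).le)

theorem dppm_quadratic_R_superlinear_general {n : ℕ} (hn : 0 < n)
    (Q : Matrix (Fin n) (Fin n) ℝ)
    (m : ℝ) (hm : 0 < m)
    (hmlb : ∀ y : Fin n → ℝ, m * (y ⬝ᵥ y) ≤ y ⬝ᵥ Q.mulVec y)
    (g : Fin n → (Fin n → ℝ))
    (hgunit : ∀ i, g i ⬝ᵥ g i = 1)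
    (hgconj : ∀ i j, i ≠ j → g i ⬝ᵥ Q.mulVec (g j) = 0)
    (hgli : LinearIndependent ℝ g)
    (lam : ℕ → ℝ) (hlampos : ∀ k, 0 < lam k) (hlammono : Monotone lam)
    (c : ℝ) (hc : 1 < c)
    (hratio : ∀ k : ℕ, c ≤ lam ((k + 1) * n) / lam (k * n))
    (p : ℕ → (Fin n → ℝ))
    (hp : ∀ k : ℕ, p k = g ⟨k % n, Nat.mod_lt k hn⟩ ∨ p k = -g ⟨k % n, Nat.mod_lt k hn⟩)
    (x : ℕ → (Fin n → ℝ))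
    (hupd : ∀ k : ℕ,
      x (k + 1) = (1 + lam k • (vecMulVec (p k) (p k) * Q))⁻¹.mulVec (x k)) :
    (∀ k : ℕ, Real.sqrt (x ((k + 1) * n) ⬝ᵥ Q.mulVec (x ((k + 1) * n))) ≤
        (1 / (1 + c ^ k * lam 0 * m)) *
          Real.sqrt (x (k * n) ⬝ᵥ Q.mulVec (x (k * n)))) ∧
    Tendsto x atTop (𝓝 0) ∧
    (∃ δ : ℕ → ℝ, (∀ k, 0 < δ k) ∧
      (∀ k : ℕ, Real.sqrt (x (k * n) ⬝ᵥ Q.mulVec (x (k * n))) ≤ δ k) ∧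
      Tendsto (fun k : ℕ => δ (k + 1) / δ k) atTop (𝓝 0)) := by
  have : NeZero n := ⟨hn.ne'⟩
  obtain ⟨b, rfl⟩ : ∃ b : Module.Basis (Fin n) ℝ (Fin n → ℝ), ⇑b = g :=
    ⟨basisOfLinearIndependentOfCardEqFinrank hgli (by simp),
      coe_basisOfLinearIndependentOfCardEqFinrank _ _⟩
  have hq : ∀ j, m ≤ b j ⬝ᵥ Q *ᵥ b j := fun j => by simpa [hgunit] using hmlb (b j)
  have hqpos : ∀ j, 0 ≤ b j ⬝ᵥ Q *ᵥ b j := fun j => hm.le.trans (hq j)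
  have hstep := repr_dppm_succ hn b hgconj hqpos (fun k => (hlampos k).le) hp hupd
  have hT : ∀ k, 0 < 1 / (1 + c ^ k * lam 0 * m) := fun k =>
    one_div_pos.2 (by have := hlampos 0; positivity)
  have hfactor : ∀ k (j : Fin n),
      |(1 + lam (k * n + j) * (b j ⬝ᵥ Q *ᵥ b j))⁻¹| ≤ 1 / (1 + c ^ k * lam 0 * m) := by
    intro k j
    rw [one_div]
    refine abs_inv_le_inv_of_le (by simpa using hT k)
      (add_le_add le_rfl (mul_le_mul ?_ (hq j) hm.le (hlampos _).le))
    exact pow_mul_le_of_le_div_of_monotone (by linarith) hlampos hlammono hratio k j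
  have hcycle := abs_cyclic_scaling_le (a := fun k => b.repr (x k)) hstep hfactor
  have hcontract : ∀ k, √(x ((k + 1) * n) ⬝ᵥ Q *ᵥ x ((k + 1) * n)) ≤
      1 / (1 + c ^ k * lam 0 * m) * √(x (k * n) ⬝ᵥ Q *ᵥ x (k * n)) := fun k =>
    b.sqrt_dotProduct_mulVec_le hgconj hqpos (hT k).le (hcycle k)
  have hr0 : Tendsto (fun k => 1 / (1 + c ^ k * lam 0 * m)) atTop (𝓝 0) :=
    tendsto_const_nhds.div_atTop (tendsto_atTop_add_const_left _ 1
      (((tendsto_pow_atTop_atTop_of_one_lt hc).atTop_mul_const (hlampos 0)).atTop_mul_const hm))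
  refine ⟨hcontract, ?_, exists_dominating_ratio_tendsto_zero hT hcontract hr0⟩
  have hmono := abs_cyclic_scaling_succ_le (a := fun k => b.repr (x k)) hstep fun k j =>
    (abs_inv_le_inv_of_le one_pos (le_add_of_nonneg_right
      (mul_nonneg (hlampos k).le (hqpos j)))).trans_eq inv_one
  exact b.tendsto_zero_of_forall_tendsto_repr fun j =>
    tendsto_zero_of_abs_antitone_of_subseq hn (hmono · j)
      (tendsto_zero_of_le_mul_of_tendsto_zero (fun _ => abs_nonneg _) hT (hcycle · j) hr0)

/-- R-superlinear convergence of the DPPM with geometrically increasing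
parameters and cyclic Q-conjugate search directions for a strongly convex quadratic
(Proposition 2(ii) of the paper). -/
theorem dppm_quadratic_R_superlinear {n : ℕ} (hn : 0 < n)
    (Q : Matrix (Fin n) (Fin n) ℝ) (hQsymm : Q.IsSymm) (hQpd : Q.PosDef)
    (m : ℝ) (hm : 0 < m)
    (hmeig : ∃ y : Fin n → ℝ, y ≠ 0 ∧ Q.mulVec y = m • y)
    (hmlb : ∀ y : Fin n → ℝ, m * (y ⬝ᵥ y) ≤ y ⬝ᵥ Q.mulVec y)
    (g : Fin n → (Fin n → ℝ))
    (hgunit : ∀ i, g i ⬝ᵥ g i = 1)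
    (hgconj : ∀ i j, i ≠ j → g i ⬝ᵥ Q.mulVec (g j) = 0)
    (hgli : LinearIndependent ℝ g)
    (lam : ℕ → ℝ) (hlampos : ∀ k, 0 < lam k) (hlammono : Monotone lam)
    (c : ℝ) (hc : 1 < c)
    (hratio : ∀ k : ℕ, c ≤ lam ((k + 1) * n) / lam (k * n))
    (p : ℕ → (Fin n → ℝ))
    (hp : ∀ k : ℕ, p k = g ⟨k % n, Nat.mod_lt k hn⟩ ∨ p k = -g ⟨k % n, Nat.mod_lt k hn⟩)
    (x : ℕ → (Fin n → ℝ))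
    (hupd : ∀ k : ℕ,
      x (k + 1) = (1 + lam k • (vecMulVec (p k) (p k) * Q))⁻¹.mulVec (x k)) :
    (∀ k : ℕ, Real.sqrt (x ((k + 1) * n) ⬝ᵥ Q.mulVec (x ((k + 1) * n))) ≤
        (1 / (1 + c ^ k * lam 0 * m)) *
          Real.sqrt (x (k * n) ⬝ᵥ Q.mulVec (x (k * n)))) ∧
    Tendsto x atTop (𝓝 0) ∧
    (∃ δ : ℕ → ℝ, (∀ k, 0 < δ k) ∧
      (∀ k : ℕ, Real.sqrt (x (k * n) ⬝ᵥ Q.mulVec (x (k * n))) ≤ δ k) ∧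
      Tendsto (fun k : ℕ => δ (k + 1) / δ k) atTop (𝓝 0)) :=
  dppm_quadratic_R_superlinear_general hn Q m hm hmlb g hgunit hgconj hgli lam hlampos hlammono c hc
    hratio p hp x hupd
end
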